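/- arXiv:1708.05440 — 3 statements merged into one kernel-verified Lean document; each statement's English description precedes it below -/
import Mathlib

section
/- Let d_0 < d_1 < ... < d_c be integers (a degree sequence) and let t be a natural number with t ≤ c − 1. Then Σ_{i=0}^{c} (−1)^i d_i^t ∏_{k ≠ i} 1/|d_i − d_k| = 0. That is, the pure diagram π(d) with entries π(d)_{i,d_i} = ∏_{k≠i} 1/|d_i − d_k| satisfies the Herzog–Kuhl equations. -/
open Polynomial Finset

lemma leadingCoeff_lagrange_basis {F : Type*} [Field F] {ι : Type*} [DecidableEq ι]
    (s : Finset ι) (v : ι → F) (i : ι) (hvs : Set.InjOn v s) (hi : i ∈ s) :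
    (Lagrange.basis s v i).leadingCoeff = ∏ j ∈ s.erase i, (v i - v j)⁻¹ := by
  rw [Lagrange.basis, leadingCoeff_prod]
  refine Finset.prod_congr rfl fun j hj => ?_
  rw [Lagrange.basisDivisor, leadingCoeff_mul, leadingCoeff_C, (monic_X_sub_C (v j)).leadingCoeff,
    mul_one]

lemma lagrange_sum_zero {F : Type*} [Field F] {n t : ℕ} (v : Fin (n + 1) → F)
    (hv : Function.Injective v) (ht : t < n) :
    ∑ i : Fin (n + 1), (v i) ^ t * ∏ k ∈ Finset.univ.erase i, (v i - v k)⁻¹ = 0 := by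
  have hvs : Set.InjOn v (Finset.univ : Finset (Fin (n + 1))) := hv.injOn
  have hcard : #(Finset.univ : Finset (Fin (n + 1))) = n + 1 := by simp
  have hdeg : ((X : F[X]) ^ t).degree < #(Finset.univ : Finset (Fin (n + 1))) := by
    rw [hcard, degree_X_pow]
    exact_mod_cast Nat.lt_succ_of_lt ht
  have hint : Lagrange.interpolate Finset.univ v (fun i => eval (v i) ((X : F[X]) ^ t))
      = (X : F[X]) ^ t := (Lagrange.eq_interpolate hvs hdeg).symm
  have hco := congrArg (fun p => Polynomial.coeff p n) hint
  simp only [Lagrange.interpolate_apply, Polynomial.finset_sum_coeff, eval_pow, eval_X,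
    coeff_X_pow] at hco
  rw [if_neg (Nat.ne_of_lt ht).symm] at hco
  rw [← hco]
  refine Finset.sum_congr rfl fun i _ => ?_
  have hnd : (Lagrange.basis Finset.univ v i).natDegree = n := by
    rw [Lagrange.natDegree_basis hvs (Finset.mem_univ i), hcard]
    omega
  have hcoeff := Polynomial.coeff_natDegree (p := Lagrange.basis Finset.univ v i)
  rw [hnd, leadingCoeff_lagrange_basis _ _ _ hvs (Finset.mem_univ i)] at hcoeff
  rw [coeff_C_mul, hcoeff]

/-- Pure diagrams satisfy the Herzog–Kuhl equations:
for a degree sequence `d_0 < d_1 < ... < d_c` and `0 ≤ t ≤ c − 1`,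
`Σ_{i=0}^{c} (−1)^i d_i^t ∏_{k≠i} 1/|d_i − d_k| = 0`. -/
theorem pure_diagram_herzog_kuhl (c t : ℕ) (d : Fin (c + 1) → ℤ)
    (hd : StrictMono d) (ht : t < c) :
    ∑ i : Fin (c + 1), (-1 : ℚ) ^ (i : ℕ) * (d i : ℚ) ^ t *
      ∏ k ∈ Finset.univ.erase i, (1 / |(d i : ℚ) - (d k : ℚ)|) = 0 := by
  set v : Fin (c + 1) → ℚ := fun i => (d i : ℚ) with hv
  have hvmono : StrictMono v := fun a b hab => by show (d a : ℚ) < (d b : ℚ); exact_mod_cast hd hab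
  have key := lagrange_sum_zero (t := t) v hvmono.injective ht
  have hterm : ∀ i : Fin (c + 1),
      (-1 : ℚ) ^ (i : ℕ) * (v i) ^ t * ∏ k ∈ Finset.univ.erase i, (1 / |v i - v k|)
      = (-1 : ℚ) ^ c * ((v i) ^ t * ∏ k ∈ Finset.univ.erase i, (v i - v k)⁻¹) := by
    intro i
    have habs : ∀ k ∈ Finset.univ.erase i, (v i - v k)⁻¹ =
        (if i < k then (-1 : ℚ) else 1) * (1 / |v i - v k|) := by
      intro k hk
      have hne : i ≠ k := (Finset.ne_of_mem_erase hk).symm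
      rcases lt_or_gt_of_ne hne with h | h
      · have hneg : v i - v k < 0 := sub_neg.mpr (hvmono h)
        rw [if_pos h, abs_of_neg hneg, one_div, inv_neg]
        ring
      · have hpos : 0 < v i - v k := sub_pos.mpr (hvmono h)
        rw [if_neg (not_lt.mpr h.le), abs_of_pos hpos, one_mul, one_div]
    rw [Finset.prod_congr rfl habs, Finset.prod_mul_distrib]
    have hfilter : (Finset.univ.erase i).filter (fun k => i < k) = Finset.Ioi i := by
      ext k
      simp only [Finset.mem_filter, Finset.mem_erase, Finset.mem_univ, Finset.mem_Ioi, and_true,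
        true_and]
      constructor
      · exact fun h => h.2
      · exact fun h => ⟨ne_of_gt h, h⟩
    have hcount : ∏ k ∈ Finset.univ.erase i, (if i < k then (-1 : ℚ) else 1)
        = (-1 : ℚ) ^ (c - (i : ℕ)) := by
      rw [← Finset.prod_filter_mul_prod_filter_not (Finset.univ.erase i) (fun k => i < k),
        Finset.prod_congr rfl (fun k hk => if_pos (Finset.mem_filter.mp hk).2),
        Finset.prod_congr rfl (fun k hk => if_neg (Finset.mem_filter.mp hk).2),
        Finset.prod_const, Finset.prod_const_one, mul_one, hfilter, Fin.card_Ioi]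
      congr 1
    rw [hcount]
    have hle : (i : ℕ) ≤ c := Nat.lt_succ_iff.mp i.isLt
    have hsign : (-1 : ℚ) ^ c * (-1 : ℚ) ^ (c - (i : ℕ)) = (-1 : ℚ) ^ (i : ℕ) := by
      rw [← pow_add]
      have : c + (c - (i : ℕ)) = 2 * (c - (i : ℕ)) + (i : ℕ) := by omega
      rw [this, pow_add, pow_mul, neg_one_sq, one_pow, one_mul]
    calc (-1 : ℚ) ^ (i : ℕ) * (v i) ^ t * ∏ k ∈ Finset.univ.erase i, (1 / |v i - v k|)
        = ((-1 : ℚ) ^ c * (-1 : ℚ) ^ (c - (i : ℕ))) * (v i) ^ t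
            * ∏ k ∈ Finset.univ.erase i, (1 / |v i - v k|) := by rw [hsign]
      _ = (-1 : ℚ) ^ c * ((v i) ^ t * ((-1 : ℚ) ^ (c - (i : ℕ))
            * ∏ k ∈ Finset.univ.erase i, (1 / |v i - v k|))) := by ring
  rw [Finset.sum_congr rfl (fun i _ => hterm i), ← Finset.mul_sum, key, mul_zero]
end

section
/- Let d = (d_0,...,d_c) be a degree sequence. Then the pure diagrams with degree sequence d form a one-dimensional rational vector space: if D is a diagram supported on d satisfying the Herzog–Kuhl equations Σ_i (−1)^i d_i^t D_i = 0 for 0 ≤ t ≤ c−1, then D is a scalar multiple of π(d), where π(d)_{i,d_i} = ∏_{k≠i} 1/|d_i − d_k|. -/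
/-!
Write `w i = (-1)^i D i`. The Herzog–Kuhl equations say that `∑ w i P(d i) = 0` for every
polynomial `P` of degree `< c`. Testing against `P = ∏_{k ∉ {i, j}} (X - d k)` kills all but
two terms and gives `w i ∏_{k ≠ i} (d i - d k) = w j ∏_{k ≠ j} (d j - d k)`, so this quantity is
independent of `i`. Since `d` is increasing, `∏_{k ≠ i} (d i - d k)` has sign `(-1)^(c - i)`, and
the factors `(-1)^i` cancel against it, leaving `D i ∏_{k ≠ i} |d i - d k|` independent of `i`.
-/

open Finset Polynomial

section Vandermonde

variable {ι R : Type*} [Fintype ι] [CommRing R] {x w : ι → R}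

theorem sum_mul_eval_eq_zero_of_sum_mul_pow_eq_zero {n : ℕ}
    (hw : ∀ t < n, ∑ i, w i * x i ^ t = 0) {P : R[X]} (hP : P.natDegree < n) :
    ∑ i, w i * P.eval (x i) = 0 := by
  simp_rw [eval_eq_sum_range' hP, mul_sum]
  rw [sum_comm]
  refine sum_eq_zero fun t ht => ?_
  simp_rw [mul_left_comm (w _), ← mul_sum, hw t (mem_range.mp ht), mul_zero]

variable [DecidableEq ι]

theorem mul_prod_erase_sub_eq_of_sum_mul_pow_eq_zero
    (hw : ∀ t < Fintype.card ι - 1, ∑ i, w i * x i ^ t = 0) (i j : ι) :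
    w i * ∏ k ∈ univ.erase i, (x i - x k) = w j * ∏ k ∈ univ.erase j, (x j - x k) := by
  obtain rfl | hij := eq_or_ne i j
  · rfl
  set S := (univ.erase i).erase j
  set P : R[X] := ∏ k ∈ S, (X - C (x k))
  have hi : i ∈ univ.erase j := mem_erase.mpr ⟨hij, mem_univ i⟩
  have hj : j ∈ univ.erase i := mem_erase.mpr ⟨hij.symm, mem_univ j⟩
  have hdeg : P.natDegree < Fintype.card ι - 1 := by
    have hcard : #S = Fintype.card ι - 2 := by
      rw [card_erase_of_mem hj, card_erase_of_mem (mem_univ i), card_univ]; rfl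
    have htwo : 2 ≤ Fintype.card ι := (card_pair hij).symm.trans_le (card_le_univ _)
    calc P.natDegree ≤ ∑ k ∈ S, (X - C (x k)).natDegree := natDegree_prod_le S _
      _ ≤ #S := by simpa using sum_le_sum fun k (_ : k ∈ S) => natDegree_X_sub_C_le (x k)
      _ < Fintype.card ι - 1 := by omega
  have heval (l : ι) : P.eval (x l) = ∏ k ∈ S, (x l - x k) := by simp [P, eval_prod]
  have hpair : w i * P.eval (x i) + w j * P.eval (x j) = 0 := by
    rw [← sum_mul_eval_eq_zero_of_sum_mul_pow_eq_zero hw hdeg,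
      sum_eq_add_of_mem i j (mem_univ i) (mem_univ j) hij]
    intro l _ hl
    have hlS : l ∈ S := by simp [S, hl.1, hl.2]
    rw [heval, prod_eq_zero hlS (sub_self _), mul_zero]
  rw [← mul_prod_erase _ _ hj, ← mul_prod_erase _ _ hi, erase_right_comm (a := j)]
  rw [heval, heval] at hpair
  linear_combination (x i - x j) * hpair

end Vandermonde

theorem prod_erase_sub_eq_neg_one_pow_mul_prod_abs {ι R : Type*} [Fintype ι] [LinearOrder ι]
    [LocallyFiniteOrderTop ι] [CommRing R] [LinearOrder R] [IsStrictOrderedRing R]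
    {x : ι → R} (hx : StrictMono x) (i : ι) :
    ∏ k ∈ univ.erase i, (x i - x k) = (-1) ^ #(Ioi i) * ∏ k ∈ univ.erase i, |x i - x k| := by
  have hsign : ∀ k ∈ univ.erase i,
      x i - x k = (if i < k then -1 else 1) * |x i - x k| := by
    intro k hk
    rcases lt_or_gt_of_ne (mem_erase.mp hk).1 with hki | hik
    · rw [if_neg (lt_asymm hki), one_mul, abs_of_pos (sub_pos.mpr (hx hki))]
    · rw [if_pos hik, abs_of_neg (sub_neg.mpr (hx hik)), neg_one_mul, neg_neg]
  rw [prod_congr rfl hsign, prod_mul_distrib, prod_ite, prod_const_one, mul_one, prod_const]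
  congr 3
  ext k
  simpa using fun h : i < k => h.ne'

/-- Pure diagrams on a fixed degree sequence form a one-dimensional space: any
diagram supported on `d` satisfying the Herzog–Kuhl equations is a scalar multiple
of the pure diagram `π(d)`. -/
theorem supported_HK_diagram_is_multiple_of_pure (c : ℕ) (d : Fin (c + 1) → ℤ)
    (hd : StrictMono d) (D : Fin (c + 1) → ℚ)
    (hHK : ∀ t : ℕ, t < c →
      ∑ i : Fin (c + 1), (-1 : ℚ) ^ (i : ℕ) * (d i : ℚ) ^ t * D i = 0) :
    ∃ q : ℚ, ∀ i : Fin (c + 1),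
      D i = q * ∏ k ∈ Finset.univ.erase i, (1 / |(d i : ℚ) - (d k : ℚ)|) := by
  have hx : StrictMono fun i => (d i : ℚ) := Int.cast_strictMono.comp hd
  have hconst := mul_prod_erase_sub_eq_of_sum_mul_pow_eq_zero (x := fun i => (d i : ℚ))
    (w := fun i => (-1) ^ (i : ℕ) * D i) (by simpa [mul_right_comm] using hHK)
  refine ⟨(-1) ^ c * ((-1) ^ ((0 : Fin (c + 1)) : ℕ) * D 0 *
    ∏ k ∈ univ.erase 0, ((d 0 : ℚ) - d k)), fun i => ?_⟩
  set A := ∏ k ∈ univ.erase i, |(d i : ℚ) - d k|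
  have hA : A ≠ 0 := prod_ne_zero_iff.mpr fun k hk =>
    abs_ne_zero.mpr <| sub_ne_zero.mpr (hx.injective.ne (mem_erase.mp hk).1.symm)
  have hsign : (-1 : ℚ) ^ c = (-1) ^ (i : ℕ) * (-1) ^ #(Ioi i) := by
    rw [Fin.card_Ioi, ← pow_add]; congr 1; omega
  have hsq (n : ℕ) : (-1 : ℚ) ^ n * (-1) ^ n = 1 := by
    rw [← pow_add]; exact Even.neg_one_pow ⟨n, rfl⟩
  simp only [one_div, prod_inv_distrib]
  rw [eq_mul_inv_iff_mul_eq₀ hA, ← hconst i, prod_erase_sub_eq_neg_one_pow_mul_prod_abs hx, hsign]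
  linear_combination (-(D i * A)) * hsq i - D i * A * (-1) ^ (i : ℕ) * (-1) ^ (i : ℕ) * hsq (#(Ioi i))
end

section
/- Let a_1 < a_2 < a_3 be positive integers. Then the Betti diagram β(a_1,a_2,a_3) of the codimension-three complete intersection (where β_{i,j} counts i-element subsets of {a_1,a_2,a_3} summing to j) equals z_1 π(d^1) + z_2 π(d^2) + z_3 π(d^3) + z_4 π(d^4) + z_5 π(d^5), where d^1 = (0,a_1,a_1+a_2,a_1+a_2+a_3), d^2 = (0,a_2,a_1+a_2,a_1+a_2+a_3), d^3 = (0,a_2,a_1+a_3,a_1+a_2+a_3), d^4 = (0,a_3,a_1+a_3,a_1+a_2+a_3), d^5 = (0,a_3,a_2+a_3,a_1+a_2+a_3), and z_1 = a_1 a_2 (a_2+a_3), z_2 = a_1 a_2 (a_3−a_1), z_3 = 2 a_1 a_2 (a_1+a_3−a_2), z_4 = a_1 a_2 (a_3−a_1), z_5 = a_1 a_2 (a_2+a_3). -/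
/-- The Betti diagram of a complete intersection, as an element of the diagram
space `V` (a `ℚ`-valued function of column `i` and degree `j`): the entry at
`(i,j)` counts the `i`-element subsets of the index set with degree sum `j`. -/
def bettiCI (c : ℕ) (a : Fin c → ℕ) (i : ℕ) (j : ℤ) : ℚ :=
  (((Finset.univ : Finset (Fin c)).powersetCard i).filter
    (fun T => ∑ k ∈ T, (a k : ℤ) = j)).card

/-- The pure diagram `π(d)` of a degree sequence `d = (d_0,...,d_c)`, as an element
of the diagram space: the entry `∏_{k≠i} 1/|d_i − d_k|` at position `(i, d_i)` and
`0` elsewhere. -/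
def pureD (c : ℕ) (d : Fin (c + 1) → ℤ) (i : ℕ) (j : ℤ) : ℚ :=
  if h : i < c + 1 then
    if d ⟨i, h⟩ = j then
      ∏ k ∈ Finset.univ.erase ⟨i, h⟩, (1 / |(d ⟨i, h⟩ : ℚ) - (d k : ℚ)|)
    else 0
  else 0

/-!
In column `i` the Betti diagram is a sum of indicator functions, one for the degree sum of each
`i`-subset of `{a₁, a₂, a₃}`, while `π(dᵗ)` has a single entry, `∏_{k ≠ i} 1/|dᵗᵢ - dᵗₖ|`, at degree
`dᵗᵢ`. Grouping the five pure diagrams by the degree they occupy in column `i`, the decomposition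
reduces, at each of the eight positions `(i, e)` where `β` is nonzero, to the rational identity
`∑_{t : dᵗᵢ = e} zₜ π(dᵗ)_{i,e} = 1`, which is checked by clearing denominators; at every other
position both sides vanish.
-/

open Finset

lemma bettiCI_eq_sum (c : ℕ) (a : Fin c → ℕ) (i : ℕ) (j : ℤ) :
    bettiCI c a i j = ∑ T ∈ univ.powersetCard i, if ∑ k ∈ T, (a k : ℤ) = j then 1 else 0 := by
  rw [bettiCI, card_filter, Nat.cast_sum]
  simp only [Nat.cast_ite, Nat.cast_one, Nat.cast_zero]

lemma bettiCI_zero (c : ℕ) (a : Fin c → ℕ) (j : ℤ) : bettiCI c a 0 j = if 0 = j then 1 else 0 := by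
  rw [bettiCI_eq_sum, powersetCard_zero, sum_singleton, sum_empty]

lemma bettiCI_one (c : ℕ) (a : Fin c → ℕ) (j : ℤ) :
    bettiCI c a 1 j = ∑ k, if (a k : ℤ) = j then 1 else 0 := by
  rw [bettiCI_eq_sum, powersetCard_one, sum_map]
  simp only [Function.Embedding.coeFn_mk, sum_singleton]

lemma bettiCI_self (c : ℕ) (a : Fin c → ℕ) (j : ℤ) :
    bettiCI c a c j = if ∑ k, (a k : ℤ) = j then 1 else 0 := by
  have h := powersetCard_self (univ : Finset (Fin c))
  rw [card_univ, Fintype.card_fin] at h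
  rw [bettiCI_eq_sum, h, sum_singleton]

lemma bettiCI_eq_zero_of_lt {c i : ℕ} (h : c < i) (a : Fin c → ℕ) (j : ℤ) :
    bettiCI c a i j = 0 := by
  rw [bettiCI, powersetCard_eq_empty.2 (by simpa using h)]
  rfl

/- In the three lemmas below the final `rfl` also replaces `![a1, a2, a3] k` inside the
`Decidable` instances of the `if`s, which `simp` cannot reach and `split_ifs` would trip over. -/

lemma bettiCI_three_one (a1 a2 a3 : ℕ) (j : ℤ) :
    bettiCI 3 ![a1, a2, a3] 1 j = (if (a1 : ℤ) = j then 1 else 0)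
      + (if (a2 : ℤ) = j then 1 else 0) + (if (a3 : ℤ) = j then 1 else 0) := by
  rw [bettiCI_one, Fin.sum_univ_three]
  rfl

lemma bettiCI_three_two (a1 a2 a3 : ℕ) (j : ℤ) :
    bettiCI 3 ![a1, a2, a3] 2 j = (if (a1 : ℤ) + a2 = j then 1 else 0)
      + (if (a1 : ℤ) + a3 = j then 1 else 0) + (if (a2 : ℤ) + a3 = j then 1 else 0) := by
  rw [bettiCI_eq_sum,
    show (univ : Finset (Fin 3)).powersetCard 2 = {{0, 1}, {0, 2}, {1, 2}} by decide,
    sum_insert (by decide), sum_insert (by decide), sum_singleton,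
    sum_pair (by decide), sum_pair (by decide), sum_pair (by decide), add_assoc]
  rfl

lemma bettiCI_three_three (a1 a2 a3 : ℕ) (j : ℤ) :
    bettiCI 3 ![a1, a2, a3] 3 j = if (a1 : ℤ) + a2 + a3 = j then 1 else 0 := by
  rw [bettiCI_self, Fin.sum_univ_three]
  rfl

lemma pureD_apply {c : ℕ} (d : Fin (c + 1) → ℤ) (i : Fin (c + 1)) (j : ℤ) :
    pureD c d i j = if d i = j then ∏ k ∈ univ.erase i, 1 / |(d i : ℚ) - d k| else 0 :=
  dif_pos i.isLt

lemma pureD_eq_zero_of_lt {c i : ℕ} (h : c < i) (d : Fin (c + 1) → ℤ) (j : ℤ) : pureD c d i j = 0 :=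
  dif_neg (by omega)

lemma strictMono_vec_four {α : Type*} [Preorder α] {x0 x1 x2 x3 : α} :
    StrictMono ![x0, x1, x2, x3] ↔ x0 < x1 ∧ x1 < x2 ∧ x2 < x3 := by
  simp

lemma pureD_three_of_strictMono (x : Fin 4 → ℤ) (hx : StrictMono x) (i : Fin 4) (j : ℤ) :
    pureD 3 x i j = if x i = j then
      ![((x 1 - x 0) * (x 2 - x 0) * (x 3 - x 0) : ℚ)⁻¹,
        ((x 1 - x 0) * (x 2 - x 1) * (x 3 - x 1) : ℚ)⁻¹,
        ((x 2 - x 0) * (x 2 - x 1) * (x 3 - x 2) : ℚ)⁻¹,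
        ((x 3 - x 0) * (x 3 - x 1) * (x 3 - x 2) : ℚ)⁻¹] i
      else 0 := by
  have hlt : ∀ {k l : Fin 4}, k < l → (x k : ℚ) < x l := fun h => by exact_mod_cast hx h
  rw [pureD_apply]
  congr 1
  fin_cases i <;> simp [show (univ : Finset (Fin 4)) = {0, 1, 2, 3} by decide, erase_insert_of_ne,
    abs_of_pos, abs_of_neg, hlt, mul_assoc, mul_comm]

section WeightSums

/- The identities `∑_{t : dᵗᵢ = e} zₜ π(dᵗ)_{i,e} = 1` for `(a, b, c) = (a₁, a₂, a₃)`, except at the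
two positions `(1, a₁)` and `(2, a₂ + a₃)` where a single pure diagram contributes. They are written
with iterated divisions so that `linear_combination` matches them against the separate inverses
produced by `pureD_three_of_strictMono`. -/

variable {K : Type*} [Field K] [LinearOrder K] [IsStrictOrderedRing K] {a b c : K}

theorem weight_sum_col0 (ha : 0 < a) (hab : a < b) (hbc : b < c) :
    a * b * (b + c) / a / (a + b) / (a + b + c) + a * b * (c - a) / b / (a + b) / (a + b + c)
      + 2 * a * b * (a + c - b) / b / (a + c) / (a + b + c)
      + a * b * (c - a) / c / (a + c) / (a + b + c) + a * b * (b + c) / c / (b + c) / (a + b + c)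
      = 1 := by
  have hb : 0 < b := ha.trans hab
  have hc : 0 < c := hb.trans hbc
  field_simp
  ring

theorem weight_sum_col1_b (ha : 0 < a) (hab : a < b) (hbc : b < c) :
    a * b * (c - a) / a / b / (a + c) + 2 * a * b * (a + c - b) / b / (a + c - b) / (a + c)
      = 1 := by
  have hb : 0 < b := ha.trans hab
  have hc : 0 < c := hb.trans hbc
  have hacb : a + c - b ≠ 0 := by linarith
  field_simp
  ring

theorem weight_sum_col1_c (ha : 0 < a) (hab : a < b) (hbc : b < c) :
    a * b * (c - a) / a / c / (a + b) + a * b * (b + c) / b / c / (a + b) = 1 := by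
  have hb : 0 < b := ha.trans hab
  have hc : 0 < c := hb.trans hbc
  field_simp
  ring

theorem weight_sum_col2_ab (ha : 0 < a) (hab : a < b) (hbc : b < c) :
    a * b * (b + c) / b / c / (a + b) + a * b * (c - a) / a / c / (a + b) = 1 := by
  have hb : 0 < b := ha.trans hab
  have hc : 0 < c := hb.trans hbc
  field_simp
  ring

theorem weight_sum_col2_ac (ha : 0 < a) (hab : a < b) (hbc : b < c) :
    2 * a * b * (a + c - b) / b / (a + c - b) / (a + c) + a * b * (c - a) / a / b / (a + c)
      = 1 := by
  have hb : 0 < b := ha.trans hab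
  have hc : 0 < c := hb.trans hbc
  have hacb : a + c - b ≠ 0 := by linarith
  field_simp
  ring

theorem weight_sum_col3 (ha : 0 < a) (hab : a < b) (hbc : b < c) :
    a * b * (b + c) / c / (b + c) / (a + b + c) + a * b * (c - a) / c / (a + c) / (a + b + c)
      + 2 * a * b * (a + c - b) / b / (a + c) / (a + b + c)
      + a * b * (c - a) / b / (a + b) / (a + b + c) + a * b * (b + c) / a / (a + b) / (a + b + c)
      = 1 := by
  have hb : 0 < b := ha.trans hab
  have hc : 0 < c := hb.trans hbc
  field_simp
  ring

end WeightSums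

/-- The Boij–Söderberg decomposition of the Betti diagram of a codimension-three
complete intersection with `a_1 < a_2 < a_3`. -/
theorem codim_three_decomposition (a1 a2 a3 : ℕ)
    (h1 : 0 < a1) (h12 : a1 < a2) (h23 : a2 < a3) :
    ∀ (i : ℕ) (j : ℤ),
      bettiCI 3 ![a1, a2, a3] i j =
        (a1 * a2 * (a2 + a3) : ℚ) *
            pureD 3 ![0, (a1 : ℤ), a1 + a2, a1 + a2 + a3] i j +
          (a1 * a2 * (a3 - a1) : ℚ) *
            pureD 3 ![0, (a2 : ℤ), a1 + a2, a1 + a2 + a3] i j +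
          (2 * a1 * a2 * (a1 + a3 - a2) : ℚ) *
            pureD 3 ![0, (a2 : ℤ), a1 + a3, a1 + a2 + a3] i j +
          (a1 * a2 * (a3 - a1) : ℚ) *
            pureD 3 ![0, (a3 : ℤ), a1 + a3, a1 + a2 + a3] i j +
          (a1 * a2 * (a2 + a3) : ℚ) *
            pureD 3 ![0, (a3 : ℤ), a2 + a3, a1 + a2 + a3] i j := by
  intro i j
  rcases lt_or_ge 3 i with hi | hi
  · simp only [bettiCI_eq_zero_of_lt hi, pureD_eq_zero_of_lt hi, mul_zero, add_zero]
  obtain ⟨i, rfl⟩ : ∃ k : Fin 4, (k : ℕ) = i := ⟨⟨i, by omega⟩, rfl⟩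
  rw [pureD_three_of_strictMono _ (strictMono_vec_four.2 (by omega)),
    pureD_three_of_strictMono _ (strictMono_vec_four.2 (by omega)),
    pureD_three_of_strictMono _ (strictMono_vec_four.2 (by omega)),
    pureD_three_of_strictMono _ (strictMono_vec_four.2 (by omega)),
    pureD_three_of_strictMono _ (strictMono_vec_four.2 (by omega))]
  have ha : (0 : ℚ) < a1 := by exact_mod_cast h1
  have hab : (a1 : ℚ) < a2 := by exact_mod_cast h12
  have hbc : (a2 : ℚ) < a3 := by exact_mod_cast h23
  have hz15 : (a1 * a2 * (a2 + a3) : ℚ) / a1 / a2 / (a2 + a3) = 1 := by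
    have hb : (0 : ℚ) < a2 := ha.trans hab
    field_simp [(add_pos hb (hb.trans hbc)).ne']
  fin_cases i <;>
    simp only [Fin.reduceFinMk, Matrix.cons_val, Int.cast_add, Int.cast_natCast, mul_inv_rev,
      bettiCI_zero, bettiCI_three_one, bettiCI_three_two, bettiCI_three_three]
  · split_ifs
    · linear_combination (weight_sum_col0 ha hab hbc).symm
    · ring
  · split_ifs <;> first
      | omega
      | ring1
      | linear_combination hz15.symm
      | linear_combination (weight_sum_col1_b ha hab hbc).symm
      | linear_combination (weight_sum_col1_c ha hab hbc).symm
  · split_ifs <;> first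
      | omega
      | ring1
      | linear_combination hz15.symm
      | linear_combination (weight_sum_col2_ab ha hab hbc).symm
      | linear_combination (weight_sum_col2_ac ha hab hbc).symm
  · split_ifs
    · linear_combination (weight_sum_col3 ha hab hbc).symm
    · ring
end
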